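/- arXiv:1009.0479 — 3 statements merged into one kernel-verified Lean document; each statement's English description precedes it below -/
import Mathlib

section
/- For 1 ≤ r ≤ n, the evaluation of the minor v_{(⌊r/2⌋+1, ⌊r/2⌋+2, …, r)} at Z_{i,j} = 0 for all pairs (i,j) with 1 ≤ j < i ≤ n and i + j ≤ r equals, up to sign, the monomial ∏_{1 ≤ j < i ≤ n, i+j = r+1} Z_{i,j}. -/
/-! After the substitution, the entries of the minor strictly above its antidiagonal are
variables `Z_{i,j}` with `i + j ≤ r`, hence vanish. The determinant is therefore, up to the
sign of the column reversal, the product of the antidiagonal entries; these are the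
`Z_{i,j}` with `i + j = r + 1`, together with a diagonal entry `1` when `r` is odd. -/

open MvPolynomial

/-- Evaluation of a multivariate polynomial at `X j = 0` (all other variables kept). -/
noncomputable def setZero {σ : Type*} [DecidableEq σ] {k : Type*} [Field k] (j : σ) :
    MvPolynomial σ k →ₐ[k] MvPolynomial σ k :=
  aeval (fun i => if i = j then 0 else X i)

/-- `IsRNC g J` : `g` is a residual normal crossing relative to the totally ordered
subset of variables given by the (nodup) list `J`, listed in increasing order. -/
def IsRNC {σ : Type*} [DecidableEq σ] {k : Type*} [Field k] :
    MvPolynomial σ k → List σ → Prop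
  | g, [] => ∃ c : k, c ≠ 0 ∧ g = C c
  | g, j :: J => ∃ h : MvPolynomial σ k, g = X j * h ∧ IsRNC (setZero j h) J

/-- The `(i,j)` entry (1-based indices) of the generic lower unitriangular matrix `Z`,
as a polynomial in the variables `Z_{i,j}`, `j < i` (indexed by the pair `(i,j)`). -/
noncomputable def Zent (k : Type*) [Field k] (i j : ℕ) : MvPolynomial (ℕ × ℕ) k :=
  if i = j then 1 else if j < i then X (i, j) else 0

/-- The minor `v_a` of the generic lower unitriangular matrix with rows the (1-based)
sequence `a` and columns `1, …, s`. -/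
noncomputable def vminor (k : Type*) [Field k] {s : ℕ} (a : Fin s → ℕ) :
    MvPolynomial (ℕ × ℕ) k :=
  (Matrix.of fun p q : Fin s => Zent k (a p) ((q : ℕ) + 1)).det

/-- The polynomial `𝔣_r = ∏_{s=1}^{r} v_{(⌊s/2⌋+1, …, s)}`. -/
noncomputable def fRNC (k : Type*) [Field k] (r : ℕ) : MvPolynomial (ℕ × ℕ) k :=
  ∏ s ∈ Finset.Icc 1 r, vminor k (fun p : Fin (s - s / 2) => s / 2 + 1 + (p : ℕ))

/-- The polynomial `𝔤_r = σ(𝔣_r)`, where `σ` is the variable substitution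
`Z_{i,j} ↦ Z_{n+1-j, n+1-i}`. -/
noncomputable def gRNC (k : Type*) [Field k] (n r : ℕ) : MvPolynomial (ℕ × ℕ) k :=
  rename (fun p : ℕ × ℕ => (n + 1 - p.2, n + 1 - p.1)) (fRNC k r)

/-- The (strict part of the) order on the variables `Z_{i,j}` :
`Z_{i,j} < Z_{i',j'}` iff `i+j < i'+j'`, or `i+j = i'+j'` and `i < i'`. -/
def zord : ℕ × ℕ → ℕ × ℕ → Prop :=
  fun p q => p.1 + p.2 < q.1 + q.2 ∨ (p.1 + p.2 = q.1 + q.2 ∧ p.1 < q.1)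

namespace Matrix

theorem det_eq_sign_revPerm_mul_prod_antidiagonal {R : Type*} [CommRing R] {m : ℕ}
    (M : Matrix (Fin m) (Fin m) R) (hM : ∀ p q : Fin m, q < p.rev → M p q = 0) :
    M.det = Equiv.Perm.sign (Fin.revPerm : Equiv.Perm (Fin m)) * ∏ q, M q.rev q := by
  have hL : (M.submatrix id Fin.revPerm).IsLowerTriangular := fun p q hpq =>
    hM p _ (Fin.rev_lt_rev.mpr hpq)
  have hdiag : (M.submatrix id Fin.revPerm).det = ∏ q, M q.rev q :=
    (det_of_isLowerTriangular _ hL).trans (Fintype.prod_equiv Fin.revPerm _ _ fun q => by simp)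
  rw [← hdiag, det_permute', ← mul_assoc, ← Int.cast_mul, ← Units.val_mul,
    Int.units_mul_self, Units.val_one, Int.cast_one, one_mul]

end Matrix

theorem Zent_self (k : Type*) [Field k] (i : ℕ) : Zent k i i = 1 := if_pos rfl

theorem Zent_of_lt (k : Type*) [Field k] {i j : ℕ} (h : j < i) : Zent k i j = X (i, j) := by
  rw [Zent, if_neg h.ne', if_pos h]

noncomputable def zeroSumLE (k : Type*) [Field k] (n r : ℕ) : ℕ × ℕ → MvPolynomial (ℕ × ℕ) k :=
  fun p => if 1 ≤ p.2 ∧ p.2 < p.1 ∧ p.1 ≤ n ∧ p.1 + p.2 ≤ r then 0 else X p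

section zeroSumLE

variable (k : Type*) [Field k] {n r i j : ℕ}

theorem aeval_zeroSumLE_Zent_of_add_le (hj : 1 ≤ j) (hji : j < i) (hin : i ≤ n)
    (hr : i + j ≤ r) : aeval (zeroSumLE k n r) (Zent k i j) = 0 := by
  rw [Zent_of_lt k hji, aeval_X, zeroSumLE, if_pos ⟨hj, hji, hin, hr⟩]

theorem aeval_zeroSumLE_Zent_of_lt_add (hr : r < i + j) :
    aeval (zeroSumLE k n r) (Zent k i j) = Zent k i j := by
  unfold Zent
  split_ifs with hij hji
  · exact map_one _
  · rw [aeval_X, zeroSumLE, if_neg (by omega)]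
  · exact map_zero _

theorem aeval_zeroSumLE_vminor (hrn : r ≤ n) :
    aeval (zeroSumLE k n r) (vminor k fun p : Fin (r - r / 2) => r / 2 + 1 + (p : ℕ)) =
      Equiv.Perm.sign (Fin.revPerm : Equiv.Perm (Fin (r - r / 2))) *
        ∏ q : Fin (r - r / 2), Zent k (r - q) (q + 1) := by
  have hmap : aeval (zeroSumLE k n r) (vminor k fun p : Fin (r - r / 2) => r / 2 + 1 + (p : ℕ))
      = (Matrix.of fun p q : Fin (r - r / 2) =>
          aeval (zeroSumLE k n r) (Zent k (r / 2 + 1 + p) (q + 1))).det := by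
    rw [vminor, AlgHom.map_det]
    rfl
  rw [hmap, Matrix.det_eq_sign_revPerm_mul_prod_antidiagonal]
  · congr 1
    refine Finset.prod_congr rfl fun q _ => ?_
    have hq := q.isLt
    rw [Matrix.of_apply, aeval_zeroSumLE_Zent_of_lt_add k (by rw [Fin.val_rev]; omega)]
    rw [Fin.val_rev]
    congr 1
    omega
  · intro p q hqp
    have hp := p.isLt
    rw [Fin.lt_def, Fin.val_rev] at hqp
    rw [Matrix.of_apply]
    exact aeval_zeroSumLE_Zent_of_add_le k (by omega) (by omega) (by omega) (by omega)

end zeroSumLE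

theorem prod_Zent_antidiagonal (k : Type*) [Field k] {n r : ℕ} (hrn : r ≤ n) :
    ∏ q : Fin (r - r / 2), Zent k (r - q) (q + 1) =
      ∏ p ∈ (Finset.range (n + 1) ×ˢ Finset.range (n + 1)).filter
        (fun p => 1 ≤ p.2 ∧ p.2 < p.1 ∧ p.1 ≤ n ∧ p.1 + p.2 = r + 1), X p := by
  have hsupp : ∏ q ∈ Finset.range (r / 2), Zent k (r - q) (q + 1) =
      ∏ q ∈ Finset.range (r - r / 2), Zent k (r - q) (q + 1) := by
    refine Finset.prod_subset (Finset.range_subset_range.mpr (by omega)) fun q hq hq' => ?_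
    simp only [Finset.mem_range] at hq hq'
    rw [show r - q = q + 1 by omega, Zent_self]
  have hset : (Finset.range (n + 1) ×ˢ Finset.range (n + 1)).filter
      (fun p : ℕ × ℕ => 1 ≤ p.2 ∧ p.2 < p.1 ∧ p.1 ≤ n ∧ p.1 + p.2 = r + 1) =
        (Finset.range (r / 2)).image fun q => (r - q, q + 1) := by
    ext ⟨a, b⟩
    simp only [Finset.mem_filter, Finset.mem_image, Finset.mem_product, Finset.mem_range,
      Prod.mk.injEq]
    constructor
    · rintro ⟨-, h1, h2, -, h4⟩
      exact ⟨b - 1, by omega, by omega, by omega⟩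
    · rintro ⟨q, hq, rfl, rfl⟩
      omega
  rw [Fin.prod_univ_eq_prod_range (fun q => Zent k (r - q) (q + 1)), ← hsupp, hset,
    Finset.prod_image fun x _ y _ hxy => by simp only [Prod.mk.injEq] at hxy; omega]
  exact Finset.prod_congr rfl fun q hq => Zent_of_lt k (by simp at hq; omega)

theorem stmt4_general (k : Type*) [Field k] (n r : ℕ) (hrn : r ≤ n) :
    (aeval (fun p : ℕ × ℕ =>
        if 1 ≤ p.2 ∧ p.2 < p.1 ∧ p.1 ≤ n ∧ p.1 + p.2 ≤ r then (0 : MvPolynomial (ℕ × ℕ) k)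
        else X p))
      (vminor k (fun p : Fin (r - r / 2) => r / 2 + 1 + (p : ℕ))) =
        ∏ p ∈ (Finset.range (n + 1) ×ˢ Finset.range (n + 1)).filter
          (fun p => 1 ≤ p.2 ∧ p.2 < p.1 ∧ p.1 ≤ n ∧ p.1 + p.2 = r + 1), X p ∨
    (aeval (fun p : ℕ × ℕ =>
        if 1 ≤ p.2 ∧ p.2 < p.1 ∧ p.1 ≤ n ∧ p.1 + p.2 ≤ r then (0 : MvPolynomial (ℕ × ℕ) k)
        else X p))
      (vminor k (fun p : Fin (r - r / 2) => r / 2 + 1 + (p : ℕ))) =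
        -∏ p ∈ (Finset.range (n + 1) ×ˢ Finset.range (n + 1)).filter
          (fun p => 1 ≤ p.2 ∧ p.2 < p.1 ∧ p.1 ≤ n ∧ p.1 + p.2 = r + 1), X p := by
  have h := aeval_zeroSumLE_vminor k hrn
  rw [prod_Zent_antidiagonal k hrn] at h
  rcases Int.units_eq_one_or (Equiv.Perm.sign (Fin.revPerm : Equiv.Perm (Fin (r - r / 2))))
    with hs | hs
  · rw [hs, Units.val_one, Int.cast_one, one_mul] at h
    exact Or.inl h
  · rw [hs, Units.val_neg, Units.val_one, Int.cast_neg, Int.cast_one, neg_one_mul] at h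
    exact Or.inr h

theorem stmt4 (k : Type*) [Field k] (n r : ℕ) (hr1 : 1 ≤ r) (hrn : r ≤ n) :
    (aeval (fun p : ℕ × ℕ =>
        if 1 ≤ p.2 ∧ p.2 < p.1 ∧ p.1 ≤ n ∧ p.1 + p.2 ≤ r then (0 : MvPolynomial (ℕ × ℕ) k)
        else X p))
      (vminor k (fun p : Fin (r - r / 2) => r / 2 + 1 + (p : ℕ))) =
        ∏ p ∈ (Finset.range (n + 1) ×ˢ Finset.range (n + 1)).filter
          (fun p => 1 ≤ p.2 ∧ p.2 < p.1 ∧ p.1 ≤ n ∧ p.1 + p.2 = r + 1), X p ∨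
    (aeval (fun p : ℕ × ℕ =>
        if 1 ≤ p.2 ∧ p.2 < p.1 ∧ p.1 ≤ n ∧ p.1 + p.2 ≤ r then (0 : MvPolynomial (ℕ × ℕ) k)
        else X p))
      (vminor k (fun p : Fin (r - r / 2) => r / 2 + 1 + (p : ℕ))) =
        -∏ p ∈ (Finset.range (n + 1) ×ˢ Finset.range (n + 1)).filter
          (fun p => 1 ≤ p.2 ∧ p.2 < p.1 ∧ p.1 ≤ n ∧ p.1 + p.2 = r + 1), X p :=
  stmt4_general k n r hrn
end

section
/- For each 1 ≤ r ≤ n, the polynomial 𝔤_r = σ(𝔣_r) is a residual normal crossing relative to the subset {Z_{i,j} : 1 ≤ j < i ≤ n, i + j ≥ 2n + 1 − r} of the variables, equipped with the reverse of the order: Z_{i,j} ≤ Z_{i',j'} iff i+j < i'+j', or i+j = i'+j' and i ≤ i'. -/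
open MvPolynomial

/-!
Under `σ` every factor of `𝔤_r` is a minor of `Z`, and `J` is the union of the antidiagonals
`i + j = 2n+1-s`, `2 ≤ s ≤ r`, which the order visits one after the other. Once the variables of
the antidiagonals before the `s`-th are set to zero, the `s`-th minor becomes anti-triangular, so
its determinant is `±` the product of the variables on the `s`-th antidiagonal. Dividing these
variables off one at a time and setting each to zero in the remaining factors amounts to setting
the whole antidiagonal to zero at once, so induction on `s` concludes.
-/

section ZeroVars

variable {σ R : Type*} [CommSemiring R]

noncomputable def zeroVars (S : Set σ) : MvPolynomial σ R →ₐ[R] MvPolynomial σ R :=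
  aeval fun i => open Classical in if i ∈ S then 0 else X i

theorem zeroVars_X_of_mem {S : Set σ} {i : σ} (h : i ∈ S) :
    zeroVars S (X i : MvPolynomial σ R) = 0 := by
  classical
  simp [zeroVars, h]

theorem zeroVars_X_of_notMem {S : Set σ} {i : σ} (h : i ∉ S) :
    zeroVars S (X i : MvPolynomial σ R) = X i := by
  classical
  simp [zeroVars, h]

theorem zeroVars_empty : zeroVars (∅ : Set σ) = AlgHom.id R (MvPolynomial σ R) :=
  algHom_ext fun i => zeroVars_X_of_notMem (Set.notMem_empty i)

theorem zeroVars_zeroVars (S T : Set σ) (p : MvPolynomial σ R) :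
    zeroVars S (zeroVars T p) = zeroVars (S ∪ T) p := by
  rw [← AlgHom.comp_apply]
  congr 1
  refine algHom_ext fun i => ?_
  by_cases hT : i ∈ T
  · simp [zeroVars_X_of_mem hT, zeroVars_X_of_mem (Set.mem_union_right S hT)]
  · by_cases hS : i ∈ S
    · simp [zeroVars_X_of_notMem hT, zeroVars_X_of_mem hS,
        zeroVars_X_of_mem (Set.mem_union_left T hS)]
    · simp [zeroVars_X_of_notMem hT, zeroVars_X_of_notMem hS,
        zeroVars_X_of_notMem (show i ∉ S ∪ T from fun h => h.elim hS hT)]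

theorem setZero_eq_zeroVars {k : Type*} [Field k] [DecidableEq σ] (j : σ) :
    setZero (k := k) j = zeroVars {j} := by
  refine algHom_ext fun i => ?_
  by_cases h : i = j
  · simp [setZero, h, zeroVars_X_of_mem]
  · simp [setZero, h, zeroVars_X_of_notMem]

end ZeroVars

section IsRNC

variable {σ k : Type*} [DecidableEq σ] [Field k]

theorem IsRNC.C_mul {g : MvPolynomial σ k} {J : List σ} (hg : IsRNC g J) {c : k} (hc : c ≠ 0) :
    IsRNC (C c * g) J := by
  induction J generalizing g with
  | nil =>
    obtain ⟨c', hc', rfl⟩ := hg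
    exact ⟨c * c', mul_ne_zero hc hc', MvPolynomial.C_mul.symm⟩
  | cons j J ih =>
    obtain ⟨h, rfl, hh⟩ := hg
    refine ⟨C c * h, mul_left_comm _ _ _, ?_⟩
    rw [map_mul, setZero_eq_zeroVars, zeroVars, aeval_C, algebraMap_eq, ← zeroVars,
      ← setZero_eq_zeroVars]
    exact ih hh

theorem IsRNC.list_prod_X_mul {L J : List σ} (hL : L.Nodup) {h : MvPolynomial σ k}
    (hh : IsRNC (zeroVars {j | j ∈ L} h) J) : IsRNC ((L.map X).prod * h) (L ++ J) := by
  induction L generalizing h with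
  | nil => simpa [zeroVars_empty] using hh
  | cons j L ih =>
    obtain ⟨hjL, hL⟩ := List.nodup_cons.mp hL
    refine ⟨(L.map X).prod * h, by rw [List.map_cons, List.prod_cons, mul_assoc], ?_⟩
    have hfix : setZero j ((L.map X).prod : MvPolynomial σ k) = (L.map X).prod := by
      rw [map_list_prod, List.map_map]
      congr 1
      refine List.map_congr_left fun i hi => ?_
      rw [Function.comp_apply, setZero_eq_zeroVars,
        zeroVars_X_of_notMem (by rintro rfl; exact hjL hi)]
    rw [map_mul, hfix]
    refine ih hL ?_
    rw [setZero_eq_zeroVars, zeroVars_zeroVars]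
    convert hh using 3
    ext i
    simp

end IsRNC

theorem Matrix.det_of_antitriangular {R : Type*} [CommRing R] {m : ℕ}
    (M : Matrix (Fin m) (Fin m) R) (h : ∀ p q : Fin m, m ≤ (p : ℕ) + q → M p q = 0) :
    M.det = Equiv.Perm.sign (Fin.revPerm : Equiv.Perm (Fin m)) * ∏ p, M p.rev p := by
  have htri : (M.transpose.submatrix id Fin.revPerm).det = ∏ p, M p.rev p :=
    Matrix.det_of_isUpperTriangular fun p q hqp => h _ _ (by
      simp only [id, Fin.revPerm_apply, Fin.val_rev, Fin.lt_def] at hqp ⊢; omega)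
  have hperm := Matrix.det_permute' Fin.revPerm M.transpose
  rw [htri, Matrix.det_transpose] at hperm
  rw [hperm, ← mul_assoc, ← Int.cast_mul, ← Units.val_mul, Int.units_mul_self, Units.val_one,
    Int.cast_one, one_mul]

section Minors

variable (k : Type*) [Field k]

/-- `σ(v_s)` is the determinant of the minor of `Z` on rows `n+1-⌈s/2⌉, …, n` and columns
`n+1-s, …, n-⌊s/2⌋`. -/
noncomputable def gMinorMatrix (n s : ℕ) :
    Matrix (Fin (s - s / 2)) (Fin (s - s / 2)) (MvPolynomial (ℕ × ℕ) k) :=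
  Matrix.of fun p q => Zent k (n + 1 - (s - s / 2) + p) (n + 1 - s + q)

def antidiagVars (n s : ℕ) : List (ℕ × ℕ) :=
  (List.range (s / 2)).map fun u => (n - u, n + 1 - s + u)

def rncVars (n s : ℕ) : Set (ℕ × ℕ) :=
  {p | 1 ≤ p.2 ∧ p.2 < p.1 ∧ p.1 ≤ n ∧ 2 * n + 1 - s ≤ p.1 + p.2}

variable {k}

theorem rename_Zent {n i j : ℕ} (hin : i ≤ n) (hjn : j ≤ n) :
    rename (fun p : ℕ × ℕ => (n + 1 - p.2, n + 1 - p.1)) (Zent k i j)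
      = Zent k (n + 1 - j) (n + 1 - i) := by
  unfold Zent
  by_cases hij : i = j
  · rw [if_pos hij, if_pos (by omega), map_one]
  · by_cases hji : j < i
    · rw [if_neg hij, if_pos hji, if_neg (by omega), if_pos (by omega), rename_X]
    · rw [if_neg hij, if_neg hji, if_neg (by omega), if_neg (by omega), map_zero]

/-- `σ` transposes the minor and reverses its rows and columns. -/
theorem rename_vminor {n s : ℕ} (hsn : s ≤ n) :
    rename (fun p : ℕ × ℕ => (n + 1 - p.2, n + 1 - p.1))
        (vminor k (fun p : Fin (s - s / 2) => s / 2 + 1 + (p : ℕ)))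
      = (gMinorMatrix k n s).det := by
  rw [vminor, AlgHom.map_det, ← Matrix.det_transpose,
    ← Matrix.det_submatrix_equiv_self Fin.revPerm]
  congr 1
  refine Matrix.ext fun p q => ?_
  have hp := p.isLt
  have hq := q.isLt
  simp only [AlgHom.mapMatrix_apply, Matrix.map_apply, Matrix.of_apply, Matrix.submatrix_apply,
    Matrix.transpose_apply, gMinorMatrix, Fin.revPerm_apply, Fin.val_rev]
  rw [rename_Zent (by omega) (by omega)]
  congr 1 <;> omega

theorem gRNC_eq_prod_det {n r : ℕ} (hrn : r ≤ n) :
    gRNC k n r = ∏ s ∈ Finset.Ico 1 (r + 1), (gMinorMatrix k n s).det := by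
  rw [gRNC, fRNC, map_prod, ← Finset.Ico_add_one_right_eq_Icc]
  refine Finset.prod_congr rfl fun s hs => ?_
  exact rename_vminor (by rw [Finset.mem_Ico] at hs; omega)

theorem ne_of_zord {p q : ℕ × ℕ} (h : zord q p) : p ≠ q := by
  rintro rfl
  unfold zord at h
  omega

theorem mem_antidiagVars {n s : ℕ} (hsn : s ≤ n) {p : ℕ × ℕ} :
    p ∈ antidiagVars n s ↔
      1 ≤ p.2 ∧ p.2 < p.1 ∧ p.1 ≤ n ∧ p.1 + p.2 = 2 * n + 1 - s := by
  simp only [antidiagVars, List.mem_map, List.mem_range]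
  constructor
  · rintro ⟨u, hu, rfl⟩
    omega
  · rintro ⟨h1, h2, h3, h4⟩
    exact ⟨n - p.1, by omega, Prod.ext (by omega) (by simp only; omega)⟩

theorem pairwise_antidiagVars {n s : ℕ} (hsn : s ≤ n) :
    (antidiagVars n s).Pairwise fun p q => zord q p := by
  rw [antidiagVars, List.pairwise_map]
  refine List.pairwise_lt_range.imp_of_mem fun hu hv huv => ?_
  rw [List.mem_range] at hu hv
  unfold zord
  omega

theorem rncVars_zero (n : ℕ) : rncVars n 0 = ∅ := by
  ext p
  simp only [rncVars, Set.mem_ofPred_eq, Set.mem_empty_iff_false, iff_false]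
  omega

theorem rncVars_succ {n s : ℕ} (hs : s + 1 ≤ n) :
    rncVars n (s + 1) = {p | p ∈ antidiagVars n (s + 1)} ∪ rncVars n s := by
  ext p
  simp only [Set.mem_union, Set.mem_ofPred_eq, mem_antidiagVars hs, rncVars]
  omega

theorem zeroVars_Zent_of_mem {S : Set (ℕ × ℕ)} {i j : ℕ} (h : (i, j) ∈ S) (hji : j < i) :
    zeroVars S (Zent k i j) = 0 := by
  rw [Zent, if_neg hji.ne', if_pos hji, zeroVars_X_of_mem h]

theorem zeroVars_Zent_of_notMem {S : Set (ℕ × ℕ)} {i j : ℕ} (h : (i, j) ∉ S) :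
    zeroVars S (Zent k i j) = Zent k i j := by
  unfold Zent
  split_ifs <;> simp [zeroVars_X_of_notMem h]

theorem list_prod_antidiagVars {n s : ℕ} (hsn : s ≤ n) :
    ((antidiagVars n s).map X).prod
      = ∏ u ∈ Finset.range (s - s / 2), Zent k (n - u) (n + 1 - s + u) := by
  have hX : ∀ u < s / 2, Zent k (n - u) (n + 1 - s + u) = X (n - u, n + 1 - s + u) := by
    intro u hu
    rw [Zent, if_neg (by omega), if_pos (by omega)]
  have hlist : ((antidiagVars n s).map X).prod
      = ∏ u ∈ Finset.range (s / 2), Zent k (n - u) (n + 1 - s + u) := by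
    rw [Finset.prod_congr rfl fun u hu => hX u (Finset.mem_range.mp hu), antidiagVars,
      List.map_map, Finset.prod_eq_multiset_prod, Finset.range_val, Multiset.range,
      Multiset.map_coe, Multiset.prod_coe]
    rfl
  rcases Nat.even_or_odd s with ⟨m, rfl⟩ | ⟨m, rfl⟩
  · rw [hlist, show m + m - (m + m) / 2 = (m + m) / 2 by omega]
  · rw [hlist, show 2 * m + 1 - (2 * m + 1) / 2 = (2 * m + 1) / 2 + 1 by omega,
      Finset.prod_range_succ, Zent, if_pos (by omega), mul_one]

/-- The zeroing makes the minor anti-triangular; for `s` even its antidiagonal also contains a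
diagonal entry `1` of `Z`. -/
theorem zeroVars_det_gMinorMatrix {n s : ℕ} (hsn : s + 1 ≤ n) :
    ∃ c : k, c ≠ 0 ∧ zeroVars (rncVars n s) (gMinorMatrix k n (s + 1)).det
      = C c * ((antidiagVars n (s + 1)).map X).prod := by
  set M := (zeroVars (rncVars n s)).mapMatrix (gMinorMatrix k n (s + 1))
  have hanti : ∀ p q : Fin (s + 1 - (s + 1) / 2), s + 1 - (s + 1) / 2 ≤ (p : ℕ) + q →
      M p q = 0 := by
    intro p q hpq
    have hp := p.isLt
    simp only [M, AlgHom.mapMatrix_apply, Matrix.map_apply, gMinorMatrix, Matrix.of_apply]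
    by_cases hji : n + 1 - (s + 1) + q < n + 1 - (s + 1 - (s + 1) / 2) + p
    · exact zeroVars_Zent_of_mem (by simp only [rncVars, Set.mem_ofPred_eq]; omega) hji
    · rw [Zent, if_neg (by omega), if_neg hji, map_zero]
  have hdiag : ∀ p : Fin (s + 1 - (s + 1) / 2),
      M p.rev p = Zent k (n - p) (n + 1 - (s + 1) + p) := by
    intro p
    have hp := p.isLt
    simp only [M, AlgHom.mapMatrix_apply, Matrix.map_apply, gMinorMatrix, Matrix.of_apply,
      Fin.val_rev]
    rw [zeroVars_Zent_of_notMem (by simp only [rncVars, Set.mem_ofPred_eq]; omega)]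
    congr 1
    omega
  set ε := Equiv.Perm.sign (Fin.revPerm : Equiv.Perm (Fin (s + 1 - (s + 1) / 2)))
  refine ⟨((ε : ℤ) : k), by rcases Int.units_eq_one_or ε with h | h <;> simp [h], ?_⟩
  rw [AlgHom.map_det, Matrix.det_of_antitriangular M hanti,
    Finset.prod_congr rfl fun p _ => hdiag p,
    Fin.prod_univ_eq_prod_range (fun u => Zent k (n - u) (n + 1 - (s + 1) + u)),
    list_prod_antidiagVars hsn, map_intCast]

theorem isRNC_zeroVars_prod_det {n r : ℕ} (hrn : r ≤ n) {t : ℕ} (ht : t ≤ r) :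
    IsRNC (zeroVars (rncVars n t) (∏ s ∈ Finset.Ico (t + 1) (r + 1), (gMinorMatrix k n s).det))
      ((List.range' (t + 1) (r - t)).flatMap (antidiagVars n)) := by
  induction hd : r - t generalizing t with
  | zero =>
    obtain rfl : t = r := by omega
    simp only [Finset.Ico_self, Finset.prod_empty, map_one, List.range'_zero, List.flatMap_nil]
    exact ⟨1, one_ne_zero, C_1.symm⟩
  | succ d ih =>
    obtain ⟨c, hc, hdet⟩ := zeroVars_det_gMinorMatrix (k := k) (show t + 1 ≤ n by omega)
    rw [Finset.prod_eq_prod_Ico_succ_bot (by omega), map_mul, hdet, mul_assoc, List.range'_succ,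
      List.flatMap_cons]
    refine (IsRNC.list_prod_X_mul ((pairwise_antidiagVars (by omega)).imp ne_of_zord) ?_).C_mul hc
    rw [zeroVars_zeroVars, ← rncVars_succ (by omega)]
    exact ih (by omega) (by omega)

theorem pairwise_flatMap_antidiagVars {n r : ℕ} (hrn : r ≤ n) :
    ((List.range' 1 r).flatMap (antidiagVars n)).Pairwise fun p q => zord q p := by
  refine List.pairwise_flatMap.mpr ⟨fun s hs => pairwise_antidiagVars ?_, ?_⟩
  · rw [List.mem_range'_1] at hs
    omega
  · refine (List.pairwise_lt_range' (s := 1) (n := r)).imp_of_mem fun hs hs' hss' p hp q hq => ?_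
    rw [List.mem_range'_1] at hs hs'
    rw [mem_antidiagVars (by omega)] at hp hq
    unfold zord
    omega

theorem mem_flatMap_antidiagVars {n r : ℕ} (hrn : r ≤ n) {p : ℕ × ℕ} :
    p ∈ (List.range' 1 r).flatMap (antidiagVars n) ↔ p ∈ rncVars n r := by
  simp only [List.mem_flatMap, List.mem_range'_1, rncVars, Set.mem_ofPred_eq]
  constructor
  · rintro ⟨s, hs, hp⟩
    rw [mem_antidiagVars (by omega)] at hp
    omega
  · intro hp
    exact ⟨2 * n + 1 - (p.1 + p.2), by omega, (mem_antidiagVars (by omega)).mpr (by omega)⟩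

/-- A list sorted by the strict order `zord` is determined by its set of elements. -/
theorem eq_flatMap_antidiagVars {n r : ℕ} (hrn : r ≤ n) {l : List (ℕ × ℕ)}
    (hmem : ∀ p, p ∈ l ↔ p ∈ rncVars n r) (hsort : l.Pairwise fun p q => zord q p) :
    l = (List.range' 1 r).flatMap (antidiagVars n) := by
  have : Std.Irrefl fun p q : ℕ × ℕ => zord q p := ⟨fun p h => ne_of_zord h rfl⟩
  have : Std.Antisymm fun p q : ℕ × ℕ => zord q p :=
    ⟨fun p q h h' => by unfold zord at h h'; omega⟩
  exact hsort.eq_of_mem_iff (pairwise_flatMap_antidiagVars hrn) fun p =>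
    (hmem p).trans (mem_flatMap_antidiagVars hrn).symm

end Minors

theorem stmt5_general (k : Type*) [Field k] (n r : ℕ) (hrn : r ≤ n)
    (l : List (ℕ × ℕ))
    (hmem : ∀ p : ℕ × ℕ, p ∈ l ↔
      1 ≤ p.2 ∧ p.2 < p.1 ∧ p.1 ≤ n ∧ 2 * n + 1 - r ≤ p.1 + p.2)
    (hsort : l.Pairwise (fun p q => zord q p)) :
    IsRNC (gRNC k n r) l := by
  rw [eq_flatMap_antidiagVars hrn hmem hsort, gRNC_eq_prod_det hrn]
  simpa [rncVars_zero, zeroVars_empty] using isRNC_zeroVars_prod_det (k := k) hrn (Nat.zero_le r)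

theorem stmt5 (k : Type*) [Field k] (n r : ℕ) (hr1 : 1 ≤ r) (hrn : r ≤ n)
    (l : List (ℕ × ℕ))
    (hmem : ∀ p : ℕ × ℕ, p ∈ l ↔
      1 ≤ p.2 ∧ p.2 < p.1 ∧ p.1 ≤ n ∧ 2 * n + 1 - r ≤ p.1 + p.2)
    (hsort : l.Pairwise (fun p q => zord q p)) :
    IsRNC (gRNC k n r) l :=
  stmt5_general k n r hrn l hmem hsort
end

section
/- For each s = 1,…,n−1 let a^{(s)} = (a^{(s)}_1 < ⋯ < a^{(s)}_s) be an increasing sequence of length s in {1,…,n}. Then the product ∏_{s=1}^{n−1} det N_{⌊s/2⌋,⌈s/2⌉}(g, h; a^{(s)}), computed for the generic matrices g and h over P, lies in the ideal power D^{e(n)}, where e(n) = (n−1)²/4 if n is odd and e(n) = (n²−2n)/4 if n is even. -/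
open MvPolynomial

/-- The `(i+j) × (i+j)` matrix `N_{i,j}(g,h;a)` whose `(s,t)` entry is `g (a s) t`
for `t < i` (0-based) and `h (a s) (t - i)` for `i ≤ t < i + j`.  (Out-of-range
column indices, which never occur when `i + j ≤ n`, give junk value `0`.) -/
def Nmat {R : Type*} [CommRing R] {n : ℕ} (i j : ℕ)
    (g h : Matrix (Fin n) (Fin n) R) (a : Fin (i + j) → Fin n) :
    Matrix (Fin (i + j)) (Fin (i + j)) R :=
  Matrix.of fun s t =>
    if (t : ℕ) < i then
      (if hi : (t : ℕ) < n then g (a s) ⟨t, hi⟩ else 0)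
    else
      (if hj : (t : ℕ) - i < n then h (a s) ⟨(t : ℕ) - i, hj⟩ else 0)

/-- The minor `m(g;b)` of `g` with rows `b` and columns `1, …, s` (1-based), i.e.
columns `0, …, s-1` (0-based).  (Out-of-range column indices, which never occur
when `s ≤ n`, give junk value `0`.) -/
def minorM {R : Type*} [CommRing R] {n s : ℕ}
    (g : Matrix (Fin n) (Fin n) R) (b : Fin s → Fin n) : R :=
  (Matrix.of fun p q : Fin s =>
    if hq : (q : ℕ) < n then g (b p) ⟨q, hq⟩ else 0).det

/-!
In `N_{i,j}(g, h; a)` with `i ≤ j`, the column of `h` with index `q < i` agrees with the column of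
`g` with index `q` modulo `D`. Subtracting the latter from the former leaves the determinant
unchanged and produces `i` columns with entries in `D`, so `det N_{i,j} ∈ D ^ i`. Multiplying over
`s = 1, …, n - 1` gives the exponent `∑ ⌊s/2⌋ = ⌊(n-1)²/4⌋`.
-/

theorem Ideal.prod_mem_pow_sum {R ι : Type*} [CommRing R] (I : Ideal R) (s : Finset ι)
    (f : ι → R) (m : ι → ℕ) (h : ∀ x ∈ s, f x ∈ I ^ m x) :
    ∏ x ∈ s, f x ∈ I ^ ∑ x ∈ s, m x :=
  Finset.prod_pow_eq_pow_sum s m I ▸ Ideal.prod_mem_prod h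

namespace Matrix

variable {ι R : Type*} [Fintype ι] [DecidableEq ι] [CommRing R]

theorem det_mem_pow_card_of_col_mem (M : Matrix ι ι R) (I : Ideal R) (S : Finset ι)
    (hM : ∀ q ∈ S, ∀ p, M p q ∈ I) : M.det ∈ I ^ S.card := by
  rw [det_apply]
  refine Ideal.sum_mem _ fun σ _ => ?_
  rw [Units.smul_def, zsmul_eq_mul]
  refine Ideal.mul_mem_left _ _ ?_
  have hcard : S.card = ∑ q, if q ∈ S then 1 else 0 := by simp
  rw [hcard]
  refine Ideal.prod_mem_pow_sum I _ _ _ fun q _ => ?_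
  split_ifs with hq
  · simpa using hM q hq (σ q)
  · simp

theorem det_mem_pow_card_of_col_sub_mem {κ : Type*} [Fintype κ] (M : Matrix ι ι R)
    (I : Ideal R) (u v : κ → ι) (hv : Function.Injective v) (huv : ∀ q q', u q ≠ v q')
    (hM : ∀ q p, M p (v q) - M p (u q) ∈ I) : M.det ∈ I ^ Fintype.card κ := by
  classical
  -- `T` is the set of `q` whose column `v q` has not yet had column `u q` subtracted from it.
  suffices key : ∀ T : Finset κ, ∀ M : Matrix ι ι R,
      (∀ q ∈ T, ∀ p, M p (v q) - M p (u q) ∈ I) → (∀ q ∉ T, ∀ p, M p (v q) ∈ I) →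
      M.det ∈ I ^ Fintype.card κ from
    key Finset.univ M (fun q _ => hM q) (by simp)
  intro T
  induction T using Finset.induction_on with
  | empty =>
    intro M _ hcol
    rw [← Finset.card_univ, ← Finset.card_map ⟨v, hv⟩]
    exact det_mem_pow_card_of_col_mem M I _
      (by simpa using fun q => hcol q (Finset.notMem_empty q))
  | insert q T hqT ih =>
    intro M hsub hcol
    rw [← det_updateCol_add_smul_self M (huv q q).symm (-1)]
    refine ih _ (fun q' hq' p => ?_) (fun q' hq' p => ?_)
    · have hne : q' ≠ q := by rintro rfl; exact hqT hq'
      rw [updateCol_ne (hv.ne hne), updateCol_ne (huv q' q)]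
      exact hsub q' (Finset.mem_insert_of_mem hq') p
    · by_cases hq : q' = q
      · subst hq
        simpa [sub_eq_add_neg] using hsub q' (Finset.mem_insert_self _ _) p
      · rw [updateCol_ne (hv.ne hq)]
        exact hcol q' (by simp [hq, hq']) p

end Matrix

theorem det_Nmat_mem_pow {R : Type*} [CommRing R] {n : ℕ} {i j : ℕ} (hij : i ≤ j)
    (g h : Matrix (Fin n) (Fin n) R) (a : Fin (i + j) → Fin n) (I : Ideal R)
    (hgh : ∀ p q, h p q - g p q ∈ I) : (Nmat i j g h a).det ∈ I ^ i := by
  simpa using Matrix.det_mem_pow_card_of_col_sub_mem (Nmat i j g h a) I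
    (fun q : Fin i => ⟨q, by omega⟩) (fun q => ⟨i + q, by omega⟩)
    (fun q q' hqq' => Fin.ext (by simpa using hqq')) (fun q q' => by simp [Fin.ext_iff]; omega)
    (fun q p => by
      by_cases hq : (q : ℕ) < n
      · simpa [Nmat, hq] using hgh (a p) ⟨q, hq⟩
      · simp [Nmat, hq])

theorem sum_Icc_div_two (m : ℕ) : ∑ s ∈ Finset.Icc 1 m, s / 2 = m ^ 2 / 4 := by
  induction m with
  | zero => simp
  | succ m ih =>
    rw [Finset.sum_Icc_succ_top (by omega), ih]
    rcases Nat.even_or_odd' m with ⟨q, rfl | rfl⟩ <;> ring_nf <;> omega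

theorem ite_mod_two_eq_pred_sq_div_four (n : ℕ) :
    (if n % 2 = 0 then (n ^ 2 - 2 * n) / 4 else (n - 1) ^ 2 / 4) = (n - 1) ^ 2 / 4 := by
  rcases Nat.even_or_odd' n with ⟨q, rfl | rfl⟩
  · rcases q with _ | q
    · simp
    · rw [if_pos (by omega), show 2 * (q + 1) - 1 = 2 * q + 1 by omega]
      ring_nf; omega
  · simp

theorem stmt15_general (k : Type*) [Field k] (n : ℕ)
    (a : (s : ℕ) → Fin (s / 2 + (s - s / 2)) → Fin n) :
    (∏ s ∈ Finset.Icc 1 (n - 1),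
      (Nmat (s / 2) (s - s / 2)
        (Matrix.of fun s t : Fin n =>
          (X (Sum.inl (s, t)) : MvPolynomial ((Fin n × Fin n) ⊕ (Fin n × Fin n)) k))
        (Matrix.of fun s t : Fin n => X (Sum.inr (s, t))) (a s)).det) ∈
      (Ideal.span (Set.range fun p : Fin n × Fin n =>
        (X (Sum.inl p) - X (Sum.inr p) :
          MvPolynomial ((Fin n × Fin n) ⊕ (Fin n × Fin n)) k))) ^
        (if n % 2 = 0 then (n ^ 2 - 2 * n) / 4 else (n - 1) ^ 2 / 4) := by
  rw [ite_mod_two_eq_pred_sq_div_four, ← sum_Icc_div_two]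
  refine Ideal.prod_mem_pow_sum _ _ _ _ fun s _ =>
    det_Nmat_mem_pow (by omega) _ _ _ _ fun p q => ?_
  rw [Matrix.of_apply, Matrix.of_apply, sub_mem_comm_iff]
  exact Ideal.subset_span ⟨(p, q), rfl⟩

theorem stmt15 (k : Type*) [Field k] (n : ℕ) (hn : 2 ≤ n)
    (a : (s : ℕ) → Fin (s / 2 + (s - s / 2)) → Fin n)
    (ha : ∀ s ∈ Finset.Icc 1 (n - 1), StrictMono (a s)) :
    (∏ s ∈ Finset.Icc 1 (n - 1),
      (Nmat (s / 2) (s - s / 2)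
        (Matrix.of fun s t : Fin n =>
          (X (Sum.inl (s, t)) : MvPolynomial ((Fin n × Fin n) ⊕ (Fin n × Fin n)) k))
        (Matrix.of fun s t : Fin n => X (Sum.inr (s, t))) (a s)).det) ∈
      (Ideal.span (Set.range fun p : Fin n × Fin n =>
        (X (Sum.inl p) - X (Sum.inr p) :
          MvPolynomial ((Fin n × Fin n) ⊕ (Fin n × Fin n)) k))) ^
        (if n % 2 = 0 then (n ^ 2 - 2 * n) / 4 else (n - 1) ^ 2 / 4) :=
  stmt15_general k n a
end
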